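/- arXiv:1807.03889 — 3 statements merged into one kernel-verified Lean document; each statement's English description precedes it below -/
import Mathlib

section
/- For every real t, ∫_{−∞}^{∞} e^{itx} · (1/(π cosh x)) dx = sech(πt/2), i.e., the hyperbolic secant density 1/(π cosh x) has characteristic function 1/cosh(πt/2). -/
/-!
The logistic substitution `u = σ(2x)`, with `σ(2x) = eˣ / (2 cosh x)` and
`1 - σ(2x) = e⁻ˣ / (2 cosh x)`, turns the Beta integral `B(a, b)` into
`∫ 2 e^{(a-b)x} / (2 cosh x)^{a+b} dx`. For `a = (1 + it)/2` and `b = 1 - a` this is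
`∫ e^{itx} / cosh x dx`, while Euler's reflection formula gives
`B(a, 1 - a) = Γ(a) Γ(1 - a) = π / sin (π a) = π / cosh (π t / 2)`.
-/

open MeasureTheory Set

namespace Real

lemma sigmoid_two_mul (x : ℝ) : sigmoid (2 * x) = exp x / (2 * cosh x) := by
  have h : exp (-(2 * x)) = exp (-x) / exp x := by rw [← exp_sub]; ring_nf
  rw [sigmoid_def, cosh_eq, h]
  field_simp

lemma one_sub_sigmoid_two_mul (x : ℝ) : 1 - sigmoid (2 * x) = exp (-x) / (2 * cosh x) := by
  rw [← sigmoid_neg, ← mul_neg, sigmoid_two_mul, cosh_neg]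

lemma hasDerivAt_sigmoid_two_mul (x : ℝ) :
    HasDerivAt (fun x => sigmoid (2 * x)) (2 * (sigmoid (2 * x) * (1 - sigmoid (2 * x)))) x :=
  ((hasDerivAt_sigmoid (2 * x)).comp x ((hasDerivAt_id x).const_mul 2)).congr_deriv (by ring)

lemma range_sigmoid_two_mul : range (fun x => sigmoid (2 * x)) = Ioo 0 1 := by
  rw [← range_sigmoid]
  exact (mul_left_surjective₀ two_ne_zero).range_comp sigmoid

end Real

namespace Complex

open scoped Real

lemma ofReal_cpow_of_pos {r : ℝ} (hr : 0 < r) (a : ℂ) :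
    (r : ℂ) ^ a = cexp (Real.log r * a) := by
  rw [cpow_def_of_ne_zero (ofReal_ne_zero.2 hr.ne'), ofReal_log hr.le]

lemma sigmoid_two_mul_cpow_mul (a b : ℂ) (x : ℝ) :
    (Real.sigmoid (2 * x) : ℂ) ^ a * (1 - Real.sigmoid (2 * x) : ℂ) ^ b
      = cexp ((a - b) * x) / (2 * Real.cosh x : ℝ) ^ (a + b) := by
  have hc : 0 < 2 * Real.cosh x := by positivity
  have h1 : (1 - Real.sigmoid (2 * x) : ℂ) = (Real.exp (-x) / (2 * Real.cosh x) : ℝ) := by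
    rw [← Real.one_sub_sigmoid_two_mul]; push_cast; ring
  rw [h1, Real.sigmoid_two_mul, ofReal_cpow_of_pos (by positivity),
    ofReal_cpow_of_pos (by positivity), ofReal_cpow_of_pos hc,
    Real.log_div (Real.exp_pos _).ne' hc.ne', Real.log_div (Real.exp_pos _).ne' hc.ne',
    Real.log_exp, Real.log_exp, ← Complex.exp_add, ← Complex.exp_sub]
  congr 1
  push_cast
  ring

lemma betaIntegral_eq_integral_sigmoid (a b : ℂ) :
    betaIntegral a b = ∫ x : ℝ,
      2 * ((Real.sigmoid (2 * x) : ℂ) ^ a * (1 - Real.sigmoid (2 * x) : ℂ) ^ b) := by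
  rw [betaIntegral, intervalIntegral.integral_of_le zero_le_one, integral_Ioc_eq_integral_Ioo,
    ← Real.range_sigmoid_two_mul, ← image_univ, integral_image_eq_integral_abs_deriv_smul
      MeasurableSet.univ (fun x _ => (Real.hasDerivAt_sigmoid_two_mul x).hasDerivWithinAt)
      ((Real.sigmoid_strictMono.comp (strictMono_mul_left_of_pos two_pos)).injective.injOn),
    setIntegral_univ]
  congr 1 with x
  have hσ : 0 < Real.sigmoid (2 * x) := Real.sigmoid_pos _
  have hσ' : 0 < 1 - Real.sigmoid (2 * x) := sub_pos.2 (Real.sigmoid_lt_one _)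
  have hσc : (Real.sigmoid (2 * x) : ℂ) ≠ 0 := ofReal_ne_zero.2 hσ.ne'
  have hσc' : (1 - Real.sigmoid (2 * x) : ℂ) ≠ 0 := by exact_mod_cast hσ'.ne'
  rw [abs_of_pos (by positivity), cpow_sub _ _ hσc, cpow_sub _ _ hσc', cpow_one, cpow_one,
    real_smul]
  push_cast
  field_simp

lemma betaIntegral_one_sub {s : ℂ} (hs : 0 < s.re) (hs' : s.re < 1) :
    betaIntegral s (1 - s) = π / sin (π * s) := by
  have h := Gamma_mul_Gamma_eq_betaIntegral hs (t := 1 - s) (by simpa using hs')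
  rwa [add_sub_cancel, Gamma_one, one_mul, Gamma_mul_Gamma_one_sub, eq_comm] at h

lemma sin_pi_mul_half_add_mul_I (t : ℝ) :
    sin (π * ((1 + t * I) / 2)) = Real.cosh (π * t / 2) := by
  rw [show π * ((1 + t * I) / 2) = ((π * t / 2 : ℝ) : ℂ) * I + π / 2 by push_cast; ring,
    sin_add_pi_div_two, cos_mul_I, ofReal_cosh]

lemma integral_cexp_mul_div_cosh (t : ℝ) :
    ∫ x : ℝ, cexp (I * t * x) / Real.cosh x = π / Real.cosh (π * t / 2) := by
  have h := betaIntegral_eq_integral_sigmoid ((1 + t * I) / 2) (1 - (1 + t * I) / 2)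
  rw [betaIntegral_one_sub (by simp) (by norm_num), sin_pi_mul_half_add_mul_I] at h
  simp_rw [sigmoid_two_mul_cpow_mul, add_sub_cancel, cpow_one] at h
  rw [h]
  congr 1 with x
  push_cast
  ring_nf

end Complex

/-- The hyperbolic secant density `1/(π cosh x)` has characteristic function
`1/cosh(πt/2)`. -/
theorem stmt5 (t : ℝ) :
    ∫ x : ℝ, Complex.exp (Complex.I * t * x) * ((1 / (Real.pi * Real.cosh x) : ℝ) : ℂ)
      = ((1 / Real.cosh (Real.pi * t / 2) : ℝ) : ℂ) := by
  have hπ : (Real.pi : ℂ) ≠ 0 := Complex.ofReal_ne_zero.2 Real.pi_ne_zero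
  calc ∫ x : ℝ, Complex.exp (Complex.I * t * x) * ((1 / (Real.pi * Real.cosh x) : ℝ) : ℂ)
      = (Real.pi : ℂ)⁻¹ * ∫ x : ℝ, Complex.exp (Complex.I * t * x) / Real.cosh x := by
        rw [← integral_const_mul]
        congr 1 with x
        push_cast
        ring
    _ = _ := by
        rw [Complex.integral_cexp_mul_div_cosh]
        push_cast
        field_simp
end

section
/- For every t ≥ 1, (1/t) ∫_{−t}^{t} exp(cos y) · cos(sin y) dy ≥ 2 e^{−1} cos(1) > 0. Consequently, (1/t) ∫_{−t}^{t} F̂_{μ₀+1}(y)/F̂_{μ₀}(y) dy does not converge to 0 as t → ∞ for Poisson characteristic functions F̂_μ(y) = exp(μ(e^{iy} − 1)), so the Poisson family is not of Riemann–Lebesgue type. -/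
/-!
Since `|sin y| ≤ 1 < π` and `cos y ≥ -1`, the integrand `exp (cos y) * cos (sin y)` is bounded
below by `e⁻¹ cos 1 > 0`, which gives the averaged bound. The ratio of the Poisson characteristic
functions with means `μ₀ + 1` and `μ₀` is `exp (e^{iy} - 1)`, whose real part is `e⁻¹` times that
integrand, so the real parts of the averages stay above `e⁻¹ · 2 e⁻¹ cos 1` and cannot tend to `0`.
-/

open Filter Topology Real

lemma exp_neg_one_mul_cos_one_le (y : ℝ) :
    exp (-1) * cos 1 ≤ exp (cos y) * cos (sin y) := by
  have hcos : cos 1 ≤ cos (sin y) := by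
    rw [← cos_abs (sin y)]
    exact cos_le_cos_of_nonneg_of_le_pi (abs_nonneg _) (by linarith [pi_gt_three])
      (abs_sin_le_one y)
  exact mul_le_mul (exp_le_exp.2 (neg_one_le_cos y)) hcos cos_one_pos.le (exp_nonneg _)

lemma mul_le_intervalIntegral_of_le {f : ℝ → ℝ} {a b c : ℝ} (hab : a ≤ b)
    (hf : IntervalIntegrable f MeasureTheory.volume a b) (h : ∀ x ∈ Set.Icc a b, c ≤ f x) :
    (b - a) * c ≤ ∫ x in a..b, f x := by
  simpa using intervalIntegral.integral_mono_on hab intervalIntegrable_const hf h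

lemma two_mul_exp_neg_one_mul_cos_one_le_average {t : ℝ} (ht : 0 < t) :
    2 * exp (-1) * cos 1 ≤ (1 / t) * ∫ y in (-t)..t, exp (cos y) * cos (sin y) := by
  have hcont : Continuous fun y => exp (cos y) * cos (sin y) := by fun_prop
  have hlower := mul_le_intervalIntegral_of_le (by linarith) (hcont.intervalIntegrable (-t) t)
    fun y _ => exp_neg_one_mul_cos_one_le y
  rw [one_div_mul_eq_div, le_div_iff₀ ht]
  linarith

lemma poisson_charFun_ratio (μ z : ℂ) :
    Complex.exp ((μ + 1) * (z - 1)) / Complex.exp (μ * (z - 1)) = Complex.exp (z - 1) := by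
  rw [← Complex.exp_sub]
  ring_nf

lemma re_exp_exp_I_mul_sub_one (y : ℝ) :
    (Complex.exp (Complex.exp (Complex.I * y) - 1)).re
      = exp (-1) * (exp (cos y) * cos (sin y)) := by
  rw [Complex.exp_re]
  simp only [Complex.sub_re, Complex.sub_im, Complex.exp_re, Complex.exp_im, Complex.mul_re,
    Complex.mul_im, Complex.I_re, Complex.I_im, Complex.ofReal_re, Complex.ofReal_im,
    Complex.one_re, Complex.one_im, zero_mul, mul_zero, one_mul, zero_add, sub_self, sub_zero,
    exp_zero]
  rw [sub_eq_neg_add, exp_add]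
  ring

lemma re_average_exp_exp_I_mul_sub_one (t : ℝ) :
    ((1 / (t : ℂ)) * ∫ y in (-t)..t, Complex.exp (Complex.exp (Complex.I * y) - 1)).re
      = exp (-1) * ((1 / t) * ∫ y in (-t)..t, exp (cos y) * cos (sin y)) := by
  have hcont : Continuous fun y : ℝ => Complex.exp (Complex.exp (Complex.I * y) - 1) := by
    fun_prop
  rw [show (1 / (t : ℂ)) = ((1 / t : ℝ) : ℂ) by push_cast; rfl, Complex.re_ofReal_mul,
    ← RCLike.re_to_complex, ← intervalIntegral.intervalIntegral_re (hcont.intervalIntegrable _ _)]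
  simp only [RCLike.re_to_complex, re_exp_exp_I_mul_sub_one, intervalIntegral.integral_const_mul]
  ring

lemma not_tendsto_zero_of_le_re {α : Type*} {l : Filter α} [l.NeBot] {f : α → ℂ} {c : ℝ}
    (hc : 0 < c) (h : ∀ᶠ x in l, c ≤ (f x).re) : ¬ Tendsto f l (𝓝 0) := fun hf ↦ by
  have hre : Tendsto (fun x ↦ (f x).re) l (𝓝 0) := (Complex.continuous_re.tendsto 0).comp hf
  obtain ⟨x, hcx, hx⟩ := (h.and (hre.eventually (eventually_lt_nhds hc))).exists
  exact (hcx.trans_lt hx).false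

/-- For `t ≥ 1`, `(1/t) ∫_{−t}^{t} exp(cos y) cos(sin y) dy ≥ 2 e^{−1} cos 1 > 0`;
consequently `(1/t) ∫_{−t}^{t} F̂_{μ₀+1}(y)/F̂_{μ₀}(y) dy` does not tend to 0 as
`t → ∞` for Poisson characteristic functions `F̂_μ(y) = exp(μ(e^{iy} − 1))`. -/
theorem stmt14 :
    (∀ t : ℝ, 1 ≤ t →
        2 * Real.exp (-1) * Real.cos 1
          ≤ (1 / t) * ∫ y in (-t)..t, Real.exp (Real.cos y) * Real.cos (Real.sin y))
    ∧ 0 < 2 * Real.exp (-1) * Real.cos 1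
    ∧ (∀ μ₀ : ℝ, 0 < μ₀ →
        ¬ Tendsto
          (fun t : ℝ => (1 / (t : ℂ)) *
            ∫ y in (-t)..t,
              Complex.exp ((μ₀ + 1) * (Complex.exp (Complex.I * y) - 1)) /
                Complex.exp (μ₀ * (Complex.exp (Complex.I * y) - 1)))
          atTop (nhds 0)) := by
  have hpos : 0 < 2 * exp (-1) * cos 1 := mul_pos (by positivity) cos_one_pos
  refine ⟨fun t ht ↦ two_mul_exp_neg_one_mul_cos_one_le_average (by linarith), hpos,
    fun μ₀ _ ↦ not_tendsto_zero_of_le_re (mul_pos (exp_pos (-1)) hpos) ?_⟩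
  filter_upwards [eventually_gt_atTop 0] with t ht
  simp only [poisson_charFun_ratio, re_average_exp_exp_I_mul_sub_one]
  exact mul_le_mul_of_nonneg_left (two_mul_exp_neg_one_mul_cos_one_le_average ht) (exp_nonneg _)
end

section
/- For every real z ≥ 0 and every real r > 1, Σ_{n=0}^∞ z^{n/2} / √(n!) ≤ √(r/(r−1)) · exp(z r / 2). -/
/-!
Split each term as `z^{n/2} / √n! = √((z r)^n / n!) · √(r⁻¹^n)` and apply Cauchy–Schwarz:
the squares of the first factors sum to `exp (z r)`, those of the second to the geometric
series `(1 - r⁻¹)⁻¹ = r / (r - 1)`, and `√(exp (z r)) = exp (z r / 2)`.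
-/

open Real Nat

theorem tsum_mul_le_sqrt_mul_sqrt_of_hasSum_sq {ι : Type*} {f g : ι → ℝ} {A B : ℝ}
    (hf : ∀ i, 0 ≤ f i) (hg : ∀ i, 0 ≤ g i)
    (hfA : HasSum (fun i => f i ^ 2) A) (hgB : HasSum (fun i => g i ^ 2) B) :
    ∑' i, f i * g i ≤ √A * √B := by
  have hrpow : ∀ {h : ι → ℝ} {C : ℝ}, HasSum (fun i => h i ^ 2) C →
      HasSum (fun i => h i ^ (2 : ℝ)) (√C ^ (2 : ℝ)) := fun hC => by
    simpa only [rpow_two, sq_sqrt (hC.nonneg fun _ => sq_nonneg _)] using hC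
  obtain ⟨C, -, hCAB, hC⟩ := inner_le_Lp_mul_Lq_hasSum_of_nonneg HolderConjugate.two_two
    (sqrt_nonneg A) (sqrt_nonneg B) hf hg (hrpow hfA) (hrpow hgB)
  exact hC.tsum_eq ▸ hCAB

lemma rpow_half_div_sqrt_factorial_eq {z r : ℝ} (hz : 0 ≤ z) (hr : 0 < r) (n : ℕ) :
    z ^ ((n : ℝ) / 2) / √(n ! : ℝ) = √((z * r) ^ n / n !) * √(r⁻¹ ^ n) := by
  have hsplit : (z * r) ^ n / n ! * r⁻¹ ^ n = z ^ n / n ! := by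
    rw [mul_pow, inv_pow]
    field_simp
  rw [← sqrt_mul (by positivity), hsplit, sqrt_div (pow_nonneg hz n), sqrt_eq_rpow (z ^ n),
    ← rpow_natCast, ← rpow_mul hz, mul_one_div]

lemma hasSum_sqrt_pow_div_factorial_sq {x : ℝ} (hx : 0 ≤ x) :
    HasSum (fun n : ℕ => √(x ^ n / n !) ^ 2) (exp x) := by
  have hsq (n : ℕ) : √(x ^ n / n !) ^ 2 = x ^ n / n ! := sq_sqrt (by positivity)
  simpa only [hsq, exp_eq_exp_ℝ] using NormedSpace.expSeries_div_hasSum_exp x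

lemma hasSum_sqrt_inv_pow_sq {r : ℝ} (hr : 1 < r) :
    HasSum (fun n : ℕ => √(r⁻¹ ^ n) ^ 2) (r / (r - 1)) := by
  have hr0 : 0 < r := one_pos.trans hr
  have hgeom := hasSum_geometric_of_lt_one (inv_nonneg.2 hr0.le) (inv_lt_one_of_one_lt₀ hr)
  have hval : (1 - r⁻¹)⁻¹ = r / (r - 1) := by
    field_simp
  simpa only [sq_sqrt (by positivity : 0 ≤ r⁻¹ ^ _), hval] using hgeom

/-- For every `z ≥ 0` and `r > 1`,
`Σ_n z^{n/2}/√(n!) ≤ √(r/(r−1)) exp(z r / 2)`. -/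
theorem stmt17 (z r : ℝ) (hz : 0 ≤ z) (hr : 1 < r) :
    ∑' n : ℕ, z ^ ((n : ℝ) / 2) / Real.sqrt (Nat.factorial n : ℝ)
      ≤ Real.sqrt (r / (r - 1)) * Real.exp (z * r / 2) := by
  have hr0 : 0 < r := one_pos.trans hr
  simp_rw [rpow_half_div_sqrt_factorial_eq hz hr0]
  calc ∑' n : ℕ, √((z * r) ^ n / n !) * √(r⁻¹ ^ n)
      ≤ √(exp (z * r)) * √(r / (r - 1)) :=
        tsum_mul_le_sqrt_mul_sqrt_of_hasSum_sq (fun _ => sqrt_nonneg _) (fun _ => sqrt_nonneg _)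
          (hasSum_sqrt_pow_div_factorial_sq (by positivity)) (hasSum_sqrt_inv_pow_sq hr)
    _ = √(r / (r - 1)) * exp (z * r / 2) := by rw [exp_half, mul_comm]
end
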